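/- arXiv:2203.14903 — 3 statements merged into one kernel-verified Lean document; each statement's English description precedes it below -/
import Mathlib

section
/- Let M be a symmetric positive definite N×N real matrix and H(x) = √⟨Mx,x⟩. Let T_H(x) = Mx/⟨Mx,x⟩ on ℝ^N∖{0} and let J(x) = |det(DT_H(x))| denote the absolute value of the Jacobian determinant of T_H at x. Then J(x) = det(M)/H(x)^{2N} for every x ∈ ℝ^N∖{0}. -/
/-!
Write `q(x) = ⟨Mx, x⟩`, so that `T(x) = q(x)⁻¹ Mx`. The product rule gives
`DT(x) = q⁻¹ M (1 - q⁻¹ x wᵀ)` with `w = (M + Mᵀ) x = ∇q(x)`, valid for any square `M`.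
By the matrix determinant lemma the second factor has determinant `1 - q⁻¹ ⟨w, x⟩ = 1 - 2 = -1`,
so `det DT(x) = -det M / qᴺ`; for `M` positive definite, `q = H²` and `det M > 0`.
-/

open Matrix

namespace Matrix

variable {ι : Type*} [Fintype ι]

theorem det_one_add_vecMulVec [DecidableEq ι] {R : Type*} [CommRing R] (u v : ι → R) :
    det (1 + vecMulVec u v) = 1 + v ⬝ᵥ u := by
  rw [vecMulVec_eq Unit, det_one_add_replicateCol_mul_replicateRow]

theorem add_transpose_mulVec_dotProduct_self {R : Type*} [CommSemiring R] (M : Matrix ι ι R)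
    (x : ι → R) : (M + Mᵀ) *ᵥ x ⬝ᵥ x = 2 * (M *ᵥ x ⬝ᵥ x) := by
  rw [add_mulVec, add_dotProduct, mulVec_transpose, ← dotProduct_mulVec, dotProduct_comm x,
    two_mul]

section Field

variable {K : Type*} [Field K]

def kelvin (M : Matrix ι ι K) (x : ι → K) : ι → K :=
  (M *ᵥ x ⬝ᵥ x)⁻¹ • M *ᵥ x

variable [DecidableEq ι]

def kelvinJacobian (M : Matrix ι ι K) (x : ι → K) : Matrix ι ι K :=
  (M *ᵥ x ⬝ᵥ x)⁻¹ • (M * (1 - (M *ᵥ x ⬝ᵥ x)⁻¹ • vecMulVec x ((M + Mᵀ) *ᵥ x)))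

theorem det_kelvinJacobian {M : Matrix ι ι K} {x : ι → K} (hx : M *ᵥ x ⬝ᵥ x ≠ 0) :
    (M.kelvinJacobian x).det = -((M *ᵥ x ⬝ᵥ x)⁻¹ ^ Fintype.card ι * M.det) := by
  rw [kelvinJacobian, det_smul, det_mul, sub_eq_add_neg, ← neg_smul, ← smul_vecMulVec,
    det_one_add_vecMulVec, dotProduct_smul, add_transpose_mulVec_dotProduct_self, smul_eq_mul]
  field_simp
  ring

end Field

variable {𝕜 : Type*} [NontriviallyNormedField 𝕜] [CompleteSpace 𝕜]

theorem hasFDerivAt_mulVec {m : Type*} [Fintype m] (M : Matrix m ι 𝕜) (x : ι → 𝕜) :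
    HasFDerivAt (M *ᵥ ·) (LinearMap.toContinuousLinearMap M.mulVecLin) x :=
  (LinearMap.toContinuousLinearMap M.mulVecLin).hasFDerivAt

theorem hasFDerivAt_mulVec_dotProduct_self (M : Matrix ι ι 𝕜) (x : ι → 𝕜) :
    HasFDerivAt (fun y ↦ M *ᵥ y ⬝ᵥ y)
      (LinearMap.toContinuousLinearMap (dotProductBilin 𝕜 𝕜 ((M + Mᵀ) *ᵥ x))) x := by
  refine ((dotProductBilin 𝕜 𝕜).toContinuousBilinearMap.hasFDerivAt_of_bilinear (hasFDerivAt_mulVec M x)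
    (hasFDerivAt_id x)).congr_fderiv (ContinuousLinearMap.ext fun v ↦ ?_)
  change M *ᵥ x ⬝ᵥ v + M *ᵥ v ⬝ᵥ x = (M + Mᵀ) *ᵥ x ⬝ᵥ v
  rw [add_mulVec, add_dotProduct, mulVec_transpose, dotProduct_comm (M *ᵥ v), dotProduct_mulVec]

theorem hasFDerivAt_kelvin [DecidableEq ι] {M : Matrix ι ι 𝕜} {x : ι → 𝕜}
    (hx : M *ᵥ x ⬝ᵥ x ≠ 0) :
    HasFDerivAt M.kelvin (LinearMap.toContinuousLinearMap (toLin' (M.kelvinJacobian x))) x := by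
  have hinv := (hasDerivAt_inv hx).comp_hasFDerivAt (f := fun y ↦ M *ᵥ y ⬝ᵥ y) x
    (hasFDerivAt_mulVec_dotProduct_self M x)
  refine (hinv.smul (hasFDerivAt_mulVec M x)).congr_fderiv (ContinuousLinearMap.ext fun v ↦ ?_)
  change (M *ᵥ x ⬝ᵥ x)⁻¹ • M *ᵥ v + (-((M *ᵥ x ⬝ᵥ x) ^ 2)⁻¹ * ((M + Mᵀ) *ᵥ x ⬝ᵥ v)) • M *ᵥ x =
    M.kelvinJacobian x *ᵥ v
  rw [kelvinJacobian, mul_sub, mul_one, mul_smul_comm, mul_vecMulVec, smul_mulVec, sub_mulVec,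
    smul_mulVec, vecMulVec_mulVec, op_smul_eq_smul]
  module

end Matrix

theorem kelvin_map_jacobian_determinant {N : ℕ}
    (M : Matrix (Fin N) (Fin N) ℝ) (hM : M.PosDef)
    (H : (Fin N → ℝ) → ℝ) (hH : ∀ x, H x = Real.sqrt (M.mulVec x ⬝ᵥ x))
    (T : (Fin N → ℝ) → (Fin N → ℝ))
    (hT : ∀ x, T x = (M.mulVec x ⬝ᵥ x)⁻¹ • M.mulVec x) :
    ∀ x : Fin N → ℝ, x ≠ 0 →
      |LinearMap.det (fderiv ℝ T x : (Fin N → ℝ) →ₗ[ℝ] (Fin N → ℝ))| =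
        M.det / H x ^ (2 * N) := by
  intro x hx
  have hq : 0 < M *ᵥ x ⬝ᵥ x := by
    simpa [dotProduct_comm] using hM.dotProduct_mulVec_pos hx
  obtain rfl : T = M.kelvin := funext hT
  rw [(hasFDerivAt_kelvin hq.ne').fderiv, LinearMap.coe_toContinuousLinearMap,
    LinearMap.det_toLin', det_kelvinJacobian hq.ne', Fintype.card_fin, hH, pow_mul,
    Real.sq_sqrt hq.le, abs_neg, abs_mul, abs_of_pos (pow_pos (inv_pos.2 hq) N),
    abs_of_pos hM.det_pos, inv_pow, inv_mul_eq_div]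
end

section
/- Let N = 2 and let H : ℝ² → ℝ be defined by H(x₁,x₂) = (x₁⁴ + 3x₁²x₂² + x₂⁴)^{1/4}. Define T_H(x) = ∇H(x)/H(x) on ℝ²∖{0} and J(x) = |det(DT_H(x))|. Then the function x ↦ H(x)⁴ J(x) is NOT constant on ℝ²∖{0}; i.e. there exist x, y ∈ ℝ²∖{0} with H(x)⁴ J(x) ≠ H(y)⁴ J(y). -/
open Matrix

namespace QuarticKelvinAux

noncomputable section

def pr (i : Fin 2) : (Fin 2 → ℝ) →L[ℝ] ℝ := ContinuousLinearMap.proj i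

def Q (x : Fin 2 → ℝ) : ℝ := x 0 ^ 4 + 3 * x 0 ^ 2 * x 1 ^ 2 + x 1 ^ 4
def P0 (x : Fin 2 → ℝ) : ℝ := 4 * x 0 ^ 3 + 6 * x 0 * x 1 ^ 2
def P1 (x : Fin 2 → ℝ) : ℝ := 6 * x 0 ^ 2 * x 1 + 4 * x 1 ^ 3

def LQ (x : Fin 2 → ℝ) : (Fin 2 → ℝ) →L[ℝ] ℝ := P0 x • pr 0 + P1 x • pr 1
def LP0 (x : Fin 2 → ℝ) : (Fin 2 → ℝ) →L[ℝ] ℝ :=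
  (12 * x 0 ^ 2 + 6 * x 1 ^ 2) • pr 0 + (12 * x 0 * x 1) • pr 1
def LP1 (x : Fin 2 → ℝ) : (Fin 2 → ℝ) →L[ℝ] ℝ :=
  (12 * x 0 * x 1) • pr 0 + (6 * x 0 ^ 2 + 12 * x 1 ^ 2) • pr 1

lemma hasFDerivAt_Q (x : Fin 2 → ℝ) : HasFDerivAt Q (LQ x) x := by
  have h0 : HasFDerivAt (fun x : Fin 2 → ℝ => x 0) (pr 0) x := hasFDerivAt_apply 0 x
  have h1 : HasFDerivAt (fun x : Fin 2 → ℝ => x 1) (pr 1) x := hasFDerivAt_apply 1 x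
  have h04 := (hasDerivAt_pow 4 (x 0)).comp_hasFDerivAt x h0
  have h02 := (hasDerivAt_pow 2 (x 0)).comp_hasFDerivAt x h0
  have h12 := (hasDerivAt_pow 2 (x 1)).comp_hasFDerivAt x h1
  have h14 := (hasDerivAt_pow 4 (x 1)).comp_hasFDerivAt x h1
  have h := (h04.add (((h02.const_mul 3)).mul h12)).add h14
  refine h.congr_fderiv ?_
  ext v
  simp [LQ, P0, P1, pr, Function.comp]
  ring

lemma hasFDerivAt_P0 (x : Fin 2 → ℝ) : HasFDerivAt P0 (LP0 x) x := by
  have h0 : HasFDerivAt (fun x : Fin 2 → ℝ => x 0) (pr 0) x := hasFDerivAt_apply 0 x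
  have h1 : HasFDerivAt (fun x : Fin 2 → ℝ => x 1) (pr 1) x := hasFDerivAt_apply 1 x
  have h03 := (hasDerivAt_pow 3 (x 0)).comp_hasFDerivAt x h0
  have h12 := (hasDerivAt_pow 2 (x 1)).comp_hasFDerivAt x h1
  have h := (h03.const_mul 4).add ((h0.const_mul 6).mul h12)
  refine h.congr_fderiv ?_
  ext v
  simp [LP0, pr, Function.comp]
  ring

lemma hasFDerivAt_P1 (x : Fin 2 → ℝ) : HasFDerivAt P1 (LP1 x) x := by
  have h0 : HasFDerivAt (fun x : Fin 2 → ℝ => x 0) (pr 0) x := hasFDerivAt_apply 0 x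
  have h1 : HasFDerivAt (fun x : Fin 2 → ℝ => x 1) (pr 1) x := hasFDerivAt_apply 1 x
  have h02 := (hasDerivAt_pow 2 (x 0)).comp_hasFDerivAt x h0
  have h13 := (hasDerivAt_pow 3 (x 1)).comp_hasFDerivAt x h1
  have h := ((h02.const_mul 6).mul h1).add (h13.const_mul 4)
  refine h.congr_fderiv ?_
  ext v
  simp [LP1, pr, Function.comp]
  ring

end

end QuarticKelvinAux

namespace QuarticKelvinAux

noncomputable section

def g : Fin 2 → (Fin 2 → ℝ) → ℝ :=
  ![fun x => P0 x * (4 * Q x)⁻¹, fun x => P1 x * (4 * Q x)⁻¹]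

def G : (Fin 2 → ℝ) → Fin 2 → ℝ := fun x i => g i x

lemma Q_pos_ne (x : Fin 2 → ℝ) (hx : 0 < Q x) : x ≠ 0 := by
  rintro rfl
  simp [Q] at hx

def Dinv (a : Fin 2 → ℝ) : (Fin 2 → ℝ) →L[ℝ] ℝ :=
  (-((4 * Q a) ^ 2)⁻¹) • ((4 : ℝ) • LQ a)

def D0 (a : Fin 2 → ℝ) : (Fin 2 → ℝ) →L[ℝ] ℝ := P0 a • Dinv a + (4 * Q a)⁻¹ • LP0 a
def D1 (a : Fin 2 → ℝ) : (Fin 2 → ℝ) →L[ℝ] ℝ := P1 a • Dinv a + (4 * Q a)⁻¹ • LP1 a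

lemma fderiv_G (a : Fin 2 → ℝ) (ha : 0 < Q a) :
    fderiv ℝ G a = ContinuousLinearMap.pi ![D0 a, D1 a] := by
  have hne : (4 * Q a) ≠ 0 := by positivity
  have h4Q : HasFDerivAt (fun x => 4 * Q x) ((4 : ℝ) • LQ a) a :=
    (hasFDerivAt_Q a).const_mul 4
  have hinv : HasFDerivAt (fun x => (4 * Q x)⁻¹) (Dinv a) a :=
    (hasDerivAt_inv hne).comp_hasFDerivAt a h4Q
  have hg0 : HasFDerivAt (g 0) (D0 a) a := (hasFDerivAt_P0 a).mul hinv
  have hg1 : HasFDerivAt (g 1) (D1 a) a := (hasFDerivAt_P1 a).mul hinv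
  have hdiff : ∀ i, DifferentiableAt ℝ (g i) a := by
    intro i; fin_cases i
    exacts [hg0.differentiableAt, hg1.differentiableAt]
  have h : fderiv ℝ G a = ContinuousLinearMap.pi fun i => fderiv ℝ (g i) a :=
    fderiv_pi hdiff
  rw [h]
  congr 1
  funext i
  fin_cases i
  · exact hg0.fderiv
  · exact hg1.fderiv

end

end QuarticKelvinAux

namespace QuarticKelvinAux

noncomputable section

lemma toMatrix_a :
    LinearMap.toMatrix'
      ((ContinuousLinearMap.pi ![D0 ![1, 0], D1 ![1, 0]] :
          (Fin 2 → ℝ) →L[ℝ] (Fin 2 → ℝ)) : (Fin 2 → ℝ) →ₗ[ℝ] (Fin 2 → ℝ)) =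
      !![(-1 : ℝ), 0; 0, 3 / 2] := by
  ext i j
  fin_cases i <;> fin_cases j <;>
    simp [LinearMap.toMatrix'_apply, D0, D1, Dinv, LP0, LP1, LQ, P0, P1, Q, pr] <;>
    norm_num

end

end QuarticKelvinAux

namespace QuarticKelvinAux

noncomputable section

lemma toMatrix_b :
    LinearMap.toMatrix'
      ((ContinuousLinearMap.pi ![D0 ![1, 1], D1 ![1, 1]] :
          (Fin 2 → ℝ) →L[ℝ] (Fin 2 → ℝ)) : (Fin 2 → ℝ) →ₗ[ℝ] (Fin 2 → ℝ)) =
      !![(-(1/10) : ℝ), -(2/5); -(2/5), -(1/10)] := by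
  ext i j
  fin_cases i <;> fin_cases j <;>
    simp [LinearMap.toMatrix'_apply, D0, D1, Dinv, LP0, LP1, LQ, P0, P1, Q, pr] <;>
    norm_num

lemma det_a :
    LinearMap.det
      ((ContinuousLinearMap.pi ![D0 ![1, 0], D1 ![1, 0]] :
          (Fin 2 → ℝ) →L[ℝ] (Fin 2 → ℝ)) : (Fin 2 → ℝ) →ₗ[ℝ] (Fin 2 → ℝ)) = -(3/2) := by
  rw [← LinearMap.det_toMatrix', toMatrix_a, Matrix.det_fin_two_of]
  norm_num

lemma det_b :
    LinearMap.det
      ((ContinuousLinearMap.pi ![D0 ![1, 1], D1 ![1, 1]] :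
          (Fin 2 → ℝ) →L[ℝ] (Fin 2 → ℝ)) : (Fin 2 → ℝ) →ₗ[ℝ] (Fin 2 → ℝ)) = -(3/20) := by
  rw [← LinearMap.det_toMatrix', toMatrix_b, Matrix.det_fin_two_of]
  norm_num

end

end QuarticKelvinAux

namespace QuarticKelvinAux

noncomputable section

lemma hasFDerivAt_H (x : Fin 2 → ℝ) (hx : 0 < Q x) :
    HasFDerivAt (fun x => Q x ^ ((1:ℝ)/4))
      (((1:ℝ)/4 * Q x ^ ((1:ℝ)/4 - 1)) • LQ x) x :=
  (Real.hasDerivAt_rpow_const (Or.inl hx.ne')).comp_hasFDerivAt x (hasFDerivAt_Q x)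

lemma scalar_helper (q p : ℝ) (hq : 0 < q) :
    (q ^ ((1:ℝ)/4))⁻¹ * ((1:ℝ)/4 * q ^ ((1:ℝ)/4 - 1) * p) = p * (4 * q)⁻¹ := by
  have h : (q ^ ((1:ℝ)/4))⁻¹ * q ^ ((1:ℝ)/4 - 1) = q⁻¹ := by
    rw [← Real.rpow_neg hq.le, ← Real.rpow_add hq,
      show -((1:ℝ)/4) + ((1:ℝ)/4 - 1) = ((-1 : ℤ) : ℝ) by norm_num,
      Real.rpow_intCast, _root_.zpow_neg_one]
  calc (q ^ ((1:ℝ)/4))⁻¹ * ((1:ℝ)/4 * q ^ ((1:ℝ)/4 - 1) * p)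
      = (q ^ ((1:ℝ)/4))⁻¹ * q ^ ((1:ℝ)/4 - 1) * p / 4 := by ring
    _ = q⁻¹ * p / 4 := by rw [h]
    _ = p * (4 * q)⁻¹ := by rw [mul_inv]; ring

end

end QuarticKelvinAux

open QuarticKelvinAux

/- STATEMENT 11: for the quartic Finsler norm H(x₁,x₂) = (x₁⁴ + 3x₁²x₂² + x₂⁴)^{1/4} on
   ℝ², with T_H(x) = ∇H(x)/H(x) and J(x) = |det DT_H(x)|, the function H(x)⁴ J(x)
   (i.e. H^{2N} J with N = 2) is NOT constant on ℝ² \ {0}. -/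
theorem quartic_norm_kelvin_jacobian_not_constant
    (H : (Fin 2 → ℝ) → ℝ)
    (hH : ∀ x : Fin 2 → ℝ,
      H x = (x 0 ^ 4 + 3 * x 0 ^ 2 * x 1 ^ 2 + x 1 ^ 4) ^ ((1 : ℝ) / 4))
    (T : (Fin 2 → ℝ) → (Fin 2 → ℝ))
    (hT : ∀ x : Fin 2 → ℝ, x ≠ 0 →
      T x = (H x)⁻¹ • (fun i => fderiv ℝ H x (Pi.single i 1)))
    (J : (Fin 2 → ℝ) → ℝ)
    (hJ : ∀ x : Fin 2 → ℝ, x ≠ 0 →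
      J x = |LinearMap.det (fderiv ℝ T x : (Fin 2 → ℝ) →ₗ[ℝ] (Fin 2 → ℝ))|) :
    ∃ x y : Fin 2 → ℝ, x ≠ 0 ∧ y ≠ 0 ∧ H x ^ 4 * J x ≠ H y ^ 4 * J y := by
  have hHeq : H = fun x => Q x ^ ((1:ℝ)/4) := funext fun x => hH x
  subst hHeq
  have hTG : ∀ x : Fin 2 → ℝ, 0 < Q x → T x = G x := by
    intro x hx
    rw [hT x (Q_pos_ne x hx)]
    have hd : fderiv ℝ (fun x => Q x ^ ((1:ℝ)/4)) x
        = ((1:ℝ)/4 * Q x ^ ((1:ℝ)/4 - 1)) • LQ x := (hasFDerivAt_H x hx).fderiv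
    funext i
    simp only [Pi.smul_apply, smul_eq_mul, hd, ContinuousLinearMap.coe_smul',
      Pi.smul_apply]
    have h : (Q x ^ ((4:ℝ)⁻¹))⁻¹ * Q x ^ ((4:ℝ)⁻¹ - 1) = (Q x)⁻¹ := by
      rw [← Real.rpow_neg hx.le, ← Real.rpow_add hx,
        show -((4:ℝ)⁻¹) + ((4:ℝ)⁻¹ - 1) = ((-1 : ℤ) : ℝ) by norm_num,
        Real.rpow_intCast, _root_.zpow_neg_one]
    fin_cases i
    · simp [G, g, LQ, pr, Pi.single_apply]
      linear_combination (P0 x * (4:ℝ)⁻¹) * h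
    · simp [G, g, LQ, pr, Pi.single_apply]
      linear_combination (P1 x * (4:ℝ)⁻¹) * h
  have hQa : 0 < Q ![1, 0] := by norm_num [Q]
  have hQb : 0 < Q ![1, 1] := by norm_num [Q]
  have hopen : IsOpen {x : Fin 2 → ℝ | 0 < Q x} :=
    isOpen_lt continuous_const (by unfold Q; fun_prop)
  have hfd : ∀ x : Fin 2 → ℝ, 0 < Q x → fderiv ℝ T x = fderiv ℝ G x := fun x hx =>
    Filter.EventuallyEq.fderiv_eq
      (Filter.eventuallyEq_of_mem (hopen.mem_nhds hx) fun y hy => hTG y hy)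
  have hJa : J ![1, 0] = 3 / 2 := by
    rw [hJ _ (Q_pos_ne _ hQa), hfd _ hQa, fderiv_G _ hQa, det_a]
    norm_num
  have hJb : J ![1, 1] = 3 / 20 := by
    rw [hJ _ (Q_pos_ne _ hQb), hfd _ hQb, fderiv_G _ hQb, det_b]
    norm_num
  refine ⟨![1, 0], ![1, 1], Q_pos_ne _ hQa, Q_pos_ne _ hQb, ?_⟩
  have hHa : Q ![1, 0] ^ ((1:ℝ)/4) = 1 := by
    norm_num [Q]
  have hHb : (Q ![1, 1] ^ ((1:ℝ)/4)) ^ (4:ℕ) = 5 := by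
    have h5 : Q ![1, 1] = 5 := by norm_num [Q]
    rw [h5, ← Real.rpow_natCast ((5:ℝ) ^ ((1:ℝ)/4)) 4,
      ← Real.rpow_mul (by norm_num : (0:ℝ) ≤ 5)]
    norm_num
  simp only [hJa, hJb, hHa, hHb]
  norm_num
end

section
/- The function H : ℝ² → ℝ defined by H(x₁,x₂) = (x₁⁴ + 3x₁²x₂² + x₂⁴)^{1/4} is a Finsler norm: H is of class C² on ℝ²∖{0}, H(x) > 0 for x ≠ 0, H(sx) = |s|H(x) for all x and s ∈ ℝ, and the Hessian of H² (where H²(x₁,x₂) = √(x₁⁴ + 3x₁²x₂² + x₂⁴)) is positive definite at every point of ℝ²∖{0}. -/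
/-!
Write `H² = Q ^ (1/2)` with `Q` the quartic form. For a `C²` function `f` with `f x ≠ 0`,
`D²(f ^ p)(v, v) = p f ^ (p - 2) ((p - 1) (Df v)² + f D²f(v, v))`, so for `p = 1/2` the Hessian
of `H²` is positive definite exactly where `(DQ v)² < 2 Q D²Q(v, v)`. For this `Q` the difference
`2 Q D²Q(v, v) - (DQ v)²` is a sum of squares dominating `8 (x₁⁶ + x₂⁶) (v₁² + v₂²)`.
-/

open Real Topology

section SecondDerivative

variable {E F : Type*} [NormedAddCommGroup E] [NormedSpace ℝ E]
  [NormedAddCommGroup F] [NormedSpace ℝ F]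

theorem fderiv_fderiv_apply_eq_fderiv_apply {f : E → F} {x : E}
    (hf : DifferentiableAt ℝ (fderiv ℝ f) x) (v w : E) :
    fderiv ℝ (fderiv ℝ f) x v w = fderiv ℝ (fun y => fderiv ℝ f y w) x v := by
  rw [fderiv_clm_apply hf (differentiableAt_const w)]
  simp

theorem iteratedFDeriv_two_comp_apply_diag {φ φ' : ℝ → ℝ} {φ'' : ℝ} {f : E → ℝ} {x : E}
    (hf : ContDiffAt ℝ 2 f x) (hφ : ∀ᶠ t in 𝓝 (f x), HasDerivAt φ (φ' t) t)
    (hφ' : HasDerivAt φ' φ'' (f x)) (v : E) :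
    iteratedFDeriv ℝ 2 (fun z => φ (f z)) x ![v, v] =
      φ'' * fderiv ℝ f x v ^ 2 + φ' (f x) * iteratedFDeriv ℝ 2 f x ![v, v] := by
  have hfderiv : fderiv ℝ (fun z => φ (f z)) =ᶠ[𝓝 x] fun y => φ' (f y) • fderiv ℝ f y := by
    filter_upwards [hf.continuousAt.tendsto.eventually hφ, hf.eventually (by simp)]
      with y hφy hfy
    exact (hφy.comp_hasFDerivAt y (hfy.differentiableAt (by simp)).hasFDerivAt).fderiv
  have hφ'f : HasFDerivAt (fun y => φ' (f y)) (φ'' • fderiv ℝ f x) x :=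
    hφ'.comp_hasFDerivAt x (hf.differentiableAt (by simp)).hasFDerivAt
  have hfderiv_f : HasFDerivAt (fderiv ℝ f) (fderiv ℝ (fderiv ℝ f) x) x :=
    ((hf.fderiv_right (m := 1) le_rfl).differentiableAt one_ne_zero).hasFDerivAt
  rw [iteratedFDeriv_two_apply, iteratedFDeriv_two_apply, hfderiv.fderiv_eq,
    (hφ'f.fun_smul hfderiv_f).fderiv]
  simp only [Matrix.cons_val_zero, Matrix.cons_val_one, Matrix.cons_val_fin_one, add_apply,
    smul_apply, ContinuousLinearMap.smulRight_apply, smul_eq_mul]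
  ring

theorem iteratedFDeriv_two_rpow_apply_diag {f : E → ℝ} {x : E} (hf : ContDiffAt ℝ 2 f x)
    (hx : f x ≠ 0) (p : ℝ) (v : E) :
    iteratedFDeriv ℝ 2 (fun z => f z ^ p) x ![v, v] =
      p * f x ^ (p - 2) *
        ((p - 1) * fderiv ℝ f x v ^ 2 + f x * iteratedFDeriv ℝ 2 f x ![v, v]) := by
  have hφ : ∀ᶠ t in 𝓝 (f x), HasDerivAt (fun t => t ^ p) (p * t ^ (p - 1)) t := by
    filter_upwards [isOpen_ne.mem_nhds hx] with t ht
    exact hasDerivAt_rpow_const (Or.inl ht)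
  have hφ' : HasDerivAt (fun t => p * t ^ (p - 1)) (p * (p - 1) * f x ^ (p - 2)) (f x) := by
    have h := (hasDerivAt_rpow_const (p := p - 1) (Or.inl hx)).const_mul p
    rwa [show p - 1 - 1 = p - 2 by ring, ← mul_assoc] at h
  have hpow : f x ^ (p - 1) = f x ^ (p - 2) * f x := by
    rw [← rpow_add_one hx]
    ring_nf
  rw [iteratedFDeriv_two_comp_apply_diag hf hφ hφ', hpow]
  ring

end SecondDerivative

theorem sum_even_pow_pos {ι : Type*} [Fintype ι] {x : ι → ℝ} (hx : x ≠ 0) {n : ℕ}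
    (hn : Even n) : 0 < ∑ i, x i ^ n := by
  obtain ⟨i, hi⟩ := Function.ne_iff.mp hx
  exact Finset.sum_pos' (fun j _ => hn.pow_nonneg (x j)) ⟨i, Finset.mem_univ i, hn.pow_pos hi⟩

def quartic (x : Fin 2 → ℝ) : ℝ := x 0 ^ 4 + 3 * x 0 ^ 2 * x 1 ^ 2 + x 1 ^ 4

theorem quartic_nonneg (x : Fin 2 → ℝ) : 0 ≤ quartic x := by
  unfold quartic
  positivity

theorem quartic_pos {x : Fin 2 → ℝ} (hx : x ≠ 0) : 0 < quartic x := by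
  have h4 := sum_even_pow_pos hx (n := 4) (by decide)
  rw [Fin.sum_univ_two] at h4
  have hmixed : 0 ≤ 3 * x 0 ^ 2 * x 1 ^ 2 := by positivity
  unfold quartic
  linarith

theorem quartic_smul (s : ℝ) (x : Fin 2 → ℝ) : quartic (s • x) = s ^ 4 * quartic x := by
  simp only [quartic, Pi.smul_apply, smul_eq_mul]
  ring

theorem contDiff_quartic {n : WithTop ℕ∞} : ContDiff ℝ n quartic := by
  unfold quartic
  fun_prop

theorem fderiv_quartic_apply (y v : Fin 2 → ℝ) :
    fderiv ℝ quartic y v =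
      (4 * y 0 ^ 3 + 6 * y 0 * y 1 ^ 2) * v 0 + (6 * y 0 ^ 2 * y 1 + 4 * y 1 ^ 3) * v 1 := by
  unfold quartic
  simp (disch := fun_prop) only [fderiv_fun_add, fderiv_fun_mul, fderiv_fun_pow,
    fderiv_fun_const, Pi.zero_apply, fderiv_apply, fderiv_fun_id, ContinuousLinearMap.comp_id,
    ContinuousLinearMap.comp_zero, add_apply, smul_apply, zero_apply,
    ContinuousLinearMap.proj_apply, smul_eq_mul, nsmul_eq_mul]
  ring

theorem iteratedFDeriv_two_quartic_apply_diag (x v : Fin 2 → ℝ) :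
    iteratedFDeriv ℝ 2 quartic x ![v, v] =
      (12 * x 0 ^ 2 + 6 * x 1 ^ 2) * v 0 ^ 2 + 24 * x 0 * x 1 * v 0 * v 1
        + (6 * x 0 ^ 2 + 12 * x 1 ^ 2) * v 1 ^ 2 := by
  have hdiff : DifferentiableAt ℝ (fderiv ℝ quartic) x :=
    ((contDiff_quartic (n := 2)).fderiv_right (m := 1) le_rfl).differentiable one_ne_zero x
  rw [iteratedFDeriv_two_apply]
  simp only [Matrix.cons_val_zero, Matrix.cons_val_one]
  simp_rw [fderiv_fderiv_apply_eq_fderiv_apply hdiff, fderiv_quartic_apply]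
  simp (disch := fun_prop) only [fderiv_fun_add, fderiv_fun_mul, fderiv_fun_pow,
    fderiv_fun_const, Pi.zero_apply, fderiv_apply, fderiv_fun_id, ContinuousLinearMap.comp_id,
    ContinuousLinearMap.comp_zero, add_apply, smul_apply, zero_apply,
    ContinuousLinearMap.proj_apply, smul_eq_mul, nsmul_eq_mul]
  ring

theorem sq_fderiv_quartic_lt {x v : Fin 2 → ℝ} (hx : x ≠ 0) (hv : v ≠ 0) :
    fderiv ℝ quartic x v ^ 2 < 2 * quartic x * iteratedFDeriv ℝ 2 quartic x ![v, v] := by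
  have h6 := sum_even_pow_pos hx (n := 6) (by decide)
  have h2 := sum_even_pow_pos hv (n := 2) (by decide)
  rw [Fin.sum_univ_two] at h6 h2
  rw [← sub_pos, fderiv_quartic_apply, iteratedFDeriv_two_quartic_apply_diag]
  set a := x 0
  set b := x 1
  set u := v 0
  set w := v 1
  have hsos : 2 * quartic x * ((12 * a ^ 2 + 6 * b ^ 2) * u ^ 2 + 24 * a * b * u * w
        + (6 * a ^ 2 + 12 * b ^ 2) * w ^ 2)
        - ((4 * a ^ 3 + 6 * a * b ^ 2) * u + (6 * a ^ 2 * b + 4 * b ^ 3) * w) ^ 2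
      = 8 * (a ^ 6 + b ^ 6) * (u ^ 2 + w ^ 2) + (20 * (a ^ 2 * b * u + a * b ^ 2 * w) ^ 2
        + (16 * a ^ 4 * b ^ 2 + 24 * a ^ 2 * b ^ 4 + 4 * b ^ 6) * u ^ 2
        + (4 * a ^ 6 + 24 * a ^ 4 * b ^ 2 + 16 * a ^ 2 * b ^ 4) * w ^ 2) := by
    simp only [quartic]
    ring
  rw [hsos]
  exact add_pos_of_pos_of_nonneg (by positivity) (by positivity)

theorem iteratedFDeriv_two_quartic_rpow_half_pos {x v : Fin 2 → ℝ} (hx : x ≠ 0) (hv : v ≠ 0) :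
    0 < iteratedFDeriv ℝ 2 (fun z => quartic z ^ (1 / 2 : ℝ)) x ![v, v] := by
  have hQ := quartic_pos hx
  rw [iteratedFDeriv_two_rpow_apply_diag contDiff_quartic.contDiffAt hQ.ne']
  have hkey := sq_fderiv_quartic_lt hx hv
  have hbracket : 0 < (1 / 2 - 1) * fderiv ℝ quartic x v ^ 2
      + quartic x * iteratedFDeriv ℝ 2 quartic x ![v, v] := by linarith
  have hpow : 0 < quartic x ^ (1 / 2 - 2 : ℝ) := rpow_pos_of_pos hQ _
  positivity

theorem quartic_function_is_finsler_norm
    (H : (Fin 2 → ℝ) → ℝ)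
    (hH : ∀ x : Fin 2 → ℝ,
      H x = (x 0 ^ 4 + 3 * x 0 ^ 2 * x 1 ^ 2 + x 1 ^ 4) ^ ((1 : ℝ) / 4)) :
    -- H is C² away from the origin
    ContDiffOn ℝ 2 H {(0 : Fin 2 → ℝ)}ᶜ ∧
    -- H is positive away from the origin
    (∀ x : Fin 2 → ℝ, x ≠ 0 → 0 < H x) ∧
    -- H is absolutely 1-homogeneous
    (∀ x : Fin 2 → ℝ, ∀ s : ℝ, H (s • x) = |s| * H x) ∧
    -- the Hessian of H² is positive definite on ℝ² \ {0}
    (∀ x : Fin 2 → ℝ, x ≠ 0 → ∀ v : Fin 2 → ℝ, v ≠ 0 →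
      0 < iteratedFDeriv ℝ 2 (fun z => (H z) ^ 2) x ![v, v]) := by
  obtain rfl : H = fun x => quartic x ^ ((1 : ℝ) / 4) := funext hH
  have hsq : (fun z => (quartic z ^ ((1 : ℝ) / 4)) ^ 2) = fun z => quartic z ^ (1 / 2 : ℝ) := by
    funext z
    rw [← rpow_natCast, ← rpow_mul (quartic_nonneg z)]
    norm_num
  refine ⟨fun x hx => ?_, fun x hx => rpow_pos_of_pos (quartic_pos hx) _, fun x s => ?_,
    fun x hx v hv => ?_⟩
  · exact (contDiff_quartic.contDiffAt.rpow_const_of_ne (quartic_pos hx).ne').contDiffWithinAt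
  · dsimp only
    rw [quartic_smul, ← (show Even 4 by decide).pow_abs,
      mul_rpow (by positivity) (quartic_nonneg x), one_div, show (4 : ℝ) = (4 : ℕ) by norm_num,
      pow_rpow_inv_natCast (abs_nonneg s) (by norm_num)]
  · simpa only [hsq] using iteratedFDeriv_two_quartic_rpow_half_pos hx hv
end
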